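/- Let p be an odd prime and q = (p-1)/2. If x ∈ {1,2,...,q} and n ≥ 1 is an integer with u^[n](x) = x, then 4^n ≡ 1 (mod p). -/
import Mathlib


/-- The map `u` on `S_p = {1,...,p-1}`. -/
def u (p x : ℕ) : ℕ := if x % 2 = 0 then x / 2 else (p - x) / 2

lemma u_step (p : ℕ) (hp : p.Prime) (hodd : Odd p) (y : ℕ)
    (h1 : 1 ≤ y) (h2 : y ≤ p - 1) :
    1 ≤ u p y ∧ u p y ≤ p - 1 ∧
      ((2 : ZMod p) * (u p y : ZMod p) = (y : ZMod p) ∨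
       (2 : ZMod p) * (u p y : ZMod p) = -(y : ZMod p)) := by
  have hp3 : 3 ≤ p := by
    rcases hodd with ⟨k, hk⟩
    have := hp.two_le
    omega
  unfold u
  split_ifs with h
  · have h2y : 2 * (y / 2) = y := by omega
    refine ⟨by omega, by omega, Or.inl ?_⟩
    have hc : ((2 * (y / 2) : ℕ) : ZMod p) = (y : ZMod p) := by rw [h2y]
    push_cast at hc
    linear_combination hc
  · have hpy : (p - y) % 2 = 0 := by
      rcases hodd with ⟨k, hk⟩
      omega
    have h2y : 2 * ((p - y) / 2) = p - y := by omega
    refine ⟨by omega, by omega, Or.inr ?_⟩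
    have hc : ((2 * ((p - y) / 2) : ℕ) : ZMod p) = ((p - y : ℕ) : ZMod p) := by
      rw [h2y]
    have hy : y ≤ p := by omega
    have hcast : ((p - y : ℕ) : ZMod p) = -(y : ZMod p) := by
      rw [Nat.cast_sub hy, ZMod.natCast_self]
      ring
    rw [hcast] at hc
    push_cast at hc
    linear_combination hc

theorem stmt_14 (p : ℕ) (hp : p.Prime) (hodd : Odd p)
    (q : ℕ) (hq : q = (p - 1) / 2)
    (x : ℕ) (hx1 : 1 ≤ x) (hx2 : x ≤ q)
    (n : ℕ) (hn : 1 ≤ n) (hnx : (u p)^[n] x = x) :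
    (4 : ZMod p) ^ n = 1 := by
  have hp3 : 3 ≤ p := by
    rcases hodd with ⟨k, hk⟩
    have := hp.two_le
    omega
  have hx2' : x ≤ p - 1 := by omega
  have key : ∀ k, 1 ≤ (u p)^[k] x ∧ (u p)^[k] x ≤ p - 1 ∧
      ((2 : ZMod p) ^ k * (((u p)^[k] x : ℕ) : ZMod p) = (x : ZMod p) ∨
       (2 : ZMod p) ^ k * (((u p)^[k] x : ℕ) : ZMod p) = -(x : ZMod p)) := by
    intro k
    induction k with
    | zero => simpa using ⟨hx1, hx2'⟩
    | succ k ih =>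
      obtain ⟨ih1, ih2, ih3⟩ := ih
      rw [Function.iterate_succ_apply']
      obtain ⟨h1, h2, h3⟩ := u_step p hp hodd _ ih1 ih2
      refine ⟨h1, h2, ?_⟩
      rcases h3 with h3 | h3 <;> rcases ih3 with ih3 | ih3
      · exact Or.inl (by linear_combination (2 : ZMod p) ^ k * h3 + ih3)
      · exact Or.inr (by linear_combination (2 : ZMod p) ^ k * h3 + ih3)
      · exact Or.inr (by linear_combination (2 : ZMod p) ^ k * h3 - ih3)
      · exact Or.inl (by linear_combination (2 : ZMod p) ^ k * h3 - ih3)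
  obtain ⟨_, _, hkey⟩ := key n
  rw [hnx] at hkey
  haveI : Fact p.Prime := ⟨hp⟩
  have hxne : (x : ZMod p) ≠ 0 := by
    rw [Ne, ZMod.natCast_eq_zero_iff]
    intro hdvd
    have := Nat.le_of_dvd (by omega) hdvd
    omega
  have h4 : (4 : ZMod p) ^ n = (2 : ZMod p) ^ n * (2 : ZMod p) ^ n := by
    rw [show (4 : ZMod p) = 2 * 2 by norm_num, mul_pow]
  rcases hkey with hkey | hkey
  · have h2n : (2 : ZMod p) ^ n = 1 := by
      have := mul_right_cancel₀ hxne (hkey.trans (one_mul (x : ZMod p)).symm)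
      exact this
    rw [h4, h2n]; ring
  · have h2n : (2 : ZMod p) ^ n = -1 := by
      have : (2 : ZMod p) ^ n * (x : ZMod p) = (-1) * (x : ZMod p) := by
        rw [hkey]; ring
      exact mul_right_cancel₀ hxne this
    rw [h4, h2n]; ring
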